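/- Let g ≥ 1. Then the rank of the matrix N (over ℝ or ℚ) equals (1/3)(4^g − 1). In particular, the columns of N span the full eigenspace of M^+ for the eigenvalue −2^{g−1}. -/

import Mathlib

open scoped BigOperators

/-- The quadratic form `Σ_{i=1}^g x_i x_{g+i}` on `𝔽_2^{2g}`, with `𝔽_2^{2g}`
realized as pairs `(x_1,…,x_g), (x_{g+1},…,x_{2g})`. -/
def Qf {g : ℕ} (x : (Fin g → ZMod 2) × (Fin g → ZMod 2)) : ZMod 2 :=
  ∑ i, x.1 i * x.2 i

/-- The `4^g × 4^g` matrix `M(g)` with entry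
`M_{m,n} = (−1)^{Σ_i (m_i n_{g+i} + n_i m_{g+i})}` (exponent computed using
the representatives in `{0,1}`). -/
def Mmat (g : ℕ) :
    Matrix ((Fin g → ZMod 2) × (Fin g → ZMod 2)) ((Fin g → ZMod 2) × (Fin g → ZMod 2)) ℝ :=
  fun m n => (-1 : ℝ) ^ (∑ i, ((m.1 i).val * (n.2 i).val + (n.1 i).val * (m.2 i).val))

/-- `M⁺`, the principal submatrix of `M(g)` indexed by `K_g^+ × K_g^+`. -/
def Mplus (g : ℕ) :
    Matrix {x : (Fin g → ZMod 2) × (Fin g → ZMod 2) // Qf x = 0}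
      {x : (Fin g → ZMod 2) × (Fin g → ZMod 2) // Qf x = 0} ℝ :=
  fun m n => Mmat g m.1 n.1

/-- `M⁻`, the principal submatrix of `M(g)` indexed by `K_g^− × K_g^−`. -/
def Mminus (g : ℕ) :
    Matrix {x : (Fin g → ZMod 2) × (Fin g → ZMod 2) // Qf x = 1}
      {x : (Fin g → ZMod 2) × (Fin g → ZMod 2) // Qf x = 1} ℝ :=
  fun m n => Mmat g m.1 n.1

/-- `N`, the submatrix of `M(g)` indexed by `K_g^+ × K_g^−`. -/
def Nmat (g : ℕ) :
    Matrix {x : (Fin g → ZMod 2) × (Fin g → ZMod 2) // Qf x = 0}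
      {x : (Fin g → ZMod 2) × (Fin g → ZMod 2) // Qf x = 1} ℝ :=
  fun m n => Mmat g m.1 n.1

/-!
Write `M_{m,n} = (-1)^{B(m,n)}`, where `B = sympForm` is the polarization of the quadratic form
`Q = Qf`, and `c = 2^g`. Orthogonality of the characters `(-1)^{B(m,·)}` of `𝔽₂^{2g}` and the Gauss
sum `∑ₓ (-1)^{Q(x)} = c`, together with the indicator `(1 ± (-1)^Q) / 2` of `K_g^±`, give for
`m, n ∈ K_g^+`
  `∑_{k ∈ K_g^±} M_{m,k} M_{n,k} = (c² [m = n] ± c M_{m,n}) / 2`.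
Hence `N Nᵀ = -(c/2) (M⁺ - c)` and `(M⁺ - c)(M⁺ + c/2) = 0`. So `N` has the range of `M⁺ - c`,
which is the `-c/2`-eigenspace of `M⁺`, and its rank is the trace of the idempotent
`(M⁺ - c) / (-3c/2)`, namely `|K_g^+| (c - 1) / (3c/2) = (c² - 1) / 3` as `|K_g^+| = (c² + c) / 2`.
-/

namespace Matrix

variable {K n : Type*} [Field K] [Fintype n] [DecidableEq n]

lemma rank_eq_trace_of_isIdempotentElem {P : Matrix n n K} (hP : IsIdempotentElem P) :
    (P.rank : K) = P.trace := by
  have hlin : IsIdempotentElem P.mulVecLin := by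
    rw [IsIdempotentElem, Module.End.mul_eq_comp, ← mulVecLin_mul, hP.eq]
  rw [← trace_toLin'_eq, toLin'_apply', (LinearMap.IsIdempotentElem.isProj_range _ hlin).trace,
    rank]

section

variable {A : Matrix n n K} {a b : K}

lemma sub_smul_one_mul_comm :
    (A - b • 1) * (A - a • 1) = (A - a • 1) * (A - b • 1) := by
  simp only [sub_mul, mul_sub, smul_mul_assoc, mul_smul_comm, one_mul, mul_one]
  module

lemma range_mulVecLin_sub_smul_one_eq_eigenspace (h : (A - a • 1) * (A - b • 1) = 0)
    (hab : a ≠ b) :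
    LinearMap.range (A - a • 1).mulVecLin = Module.End.eigenspace A.mulVecLin b := by
  ext v
  rw [Module.End.mem_eigenspace_iff, mulVecLin_apply]
  constructor
  · rintro ⟨w, rfl⟩
    have hw := congrArg (· *ᵥ w) (sub_smul_one_mul_comm.trans h)
    simp only [mulVecLin_apply, ← mulVec_mulVec, sub_mulVec, smul_mulVec, one_mulVec,
      zero_mulVec] at hw ⊢
    exact sub_eq_zero.mp hw
  · intro hv
    refine ⟨(b - a)⁻¹ • v, ?_⟩
    rw [mulVecLin_apply, mulVec_smul, sub_mulVec, smul_mulVec, one_mulVec, hv, ← sub_smul,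
      smul_smul, inv_mul_cancel₀ (sub_ne_zero.mpr hab.symm), one_smul]

lemma rank_sub_smul_one_eq_trace_div (h : (A - a • 1) * (A - b • 1) = 0) (hab : a ≠ b) :
    ((A - a • 1).rank : K) = (A - a • 1).trace / (b - a) := by
  have hba : b - a ≠ 0 := sub_ne_zero.mpr hab.symm
  have hsq : (A - a • 1) * (A - a • 1) = (b - a) • (A - a • 1) := by
    have : A - a • 1 = (A - b • 1) + (b - a) • (1 : Matrix n n K) := by
      rw [sub_smul]; abel
    nth_rewrite 2 [this]
    rw [mul_add, h, zero_add, mul_smul_comm, mul_one]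
  have hP : IsIdempotentElem ((b - a)⁻¹ • (A - a • 1)) := by
    rw [IsIdempotentElem, smul_mul_smul_comm, hsq, smul_smul]
    congr 1
    field_simp
  have := rank_eq_trace_of_isIdempotentElem hP
  rw [rank_smul_of_mem_nonZeroDivisors _ (mem_nonZeroDivisors_of_ne_zero (inv_ne_zero hba)),
    trace_smul, smul_eq_mul] at this
  rw [this, inv_mul_eq_div]

end

lemma range_mulVecLin_smul {R m n : Type*} [Field R] [Fintype n] {a : R} (A : Matrix m n R)
    (ha : a ≠ 0) : LinearMap.range (a • A).mulVecLin = LinearMap.range A.mulVecLin := by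
  rw [show (a • A).mulVecLin = a • A.mulVecLin from map_smul (mulVecBilin R R) a A,
    LinearMap.range_smul _ _ ha]

lemma range_mulVecLin_self_mul_transpose {R m n : Type*} [Field R] [LinearOrder R]
    [IsStrictOrderedRing R] [Fintype m] [Fintype n] (A : Matrix m n R) :
    LinearMap.range (A * Aᵀ).mulVecLin = LinearMap.range A.mulVecLin :=
  Submodule.eq_of_le_of_finrank_le
    (by rw [mulVecLin_mul]; exact LinearMap.range_comp_le_range _ _)
    (rank_self_mul_transpose A).ge

end Matrix

namespace ZMod

noncomputable def signChar : AddChar (ZMod 2) ℝ :=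
  AddChar.zmodChar 2 (neg_one_sq : (-1 : ℝ) ^ 2 = 1)

lemma signChar_natCast (k : ℕ) : signChar k = (-1) ^ k := AddChar.zmodChar_apply' _ k

lemma signChar_one : signChar 1 = -1 := by simpa using signChar_natCast 1

lemma signChar_eq_one_iff {x : ZMod 2} : signChar x = 1 ↔ x = 0 := by
  obtain rfl | rfl : x = 0 ∨ x = 1 := by decide +revert
  all_goals norm_num [signChar_one]

lemma boole_eq_signChar (x ε : ZMod 2) :
    (if x = ε then 1 else 0 : ℝ) = (1 + signChar ε * signChar x) / 2 := by
  obtain rfl | rfl : x = 0 ∨ x = 1 := by decide +revert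
  all_goals obtain rfl | rfl : ε = 0 ∨ ε = 1 := by decide +revert
  all_goals norm_num [signChar_one]

lemma sum_signChar_dotProduct {ι : Type*} [Fintype ι] [DecidableEq ι] (v : ι → ZMod 2) :
    ∑ w, signChar (v ⬝ᵥ w) = if v = 0 then 2 ^ Fintype.card ι else 0 := by
  let ψ := signChar.compAddMonoidHom (AddMonoidHom.mk' (v ⬝ᵥ ·) (dotProduct_add v))
  have hψ : ψ = 0 ↔ v = 0 := by
    simp only [AddChar.eq_zero_iff, ψ, AddChar.compAddMonoidHom_apply, AddMonoidHom.mk'_apply,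
      signChar_eq_one_iff, dotProduct_eq_zero_iff]
  simpa only [hψ, ψ, AddChar.compAddMonoidHom_apply, AddMonoidHom.mk'_apply, Fintype.card_fun,
    ZMod.card, Nat.cast_pow, Nat.cast_ofNat] using AddChar.sum_eq_ite ψ

end ZMod

open Matrix ZMod

abbrev F2Pair (g : ℕ) : Type := (Fin g → ZMod 2) × (Fin g → ZMod 2)

section

variable {g : ℕ}

def sympForm (x y : F2Pair g) : ZMod 2 := x.1 ⬝ᵥ y.2 + y.1 ⬝ᵥ x.2

lemma sympForm_comm (x y : F2Pair g) : sympForm x y = sympForm y x := add_comm _ _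

lemma sympForm_add_left (x y z : F2Pair g) :
    sympForm (x + y) z = sympForm x z + sympForm y z := by
  simp only [sympForm, Prod.fst_add, Prod.snd_add, add_dotProduct, dotProduct_add]
  ring

@[simp]
lemma sympForm_zero_left (y : F2Pair g) : sympForm 0 y = 0 := by simp [sympForm]

@[simp]
lemma sympForm_self (x : F2Pair g) : sympForm x x = 0 := CharTwo.add_self_eq_zero _

@[simp]
lemma Qf_zero : Qf (0 : F2Pair g) = 0 := by simp [Qf]

lemma Qf_add (x y : F2Pair g) : Qf (x + y) = Qf x + Qf y + sympForm x y := by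
  simp only [Qf, sympForm, dotProduct, Prod.fst_add, Prod.snd_add, Pi.add_apply,
    ← Finset.sum_add_distrib]
  exact Finset.sum_congr rfl fun i _ ↦ by ring

lemma F2Pair.neg_eq (x : F2Pair g) : -x = x :=
  neg_eq_of_add_eq_zero_left (by rw [← two_nsmul]; exact ZModModule.char_nsmul_eq_zero 2 x)

lemma F2Pair.add_eq_zero_iff {x y : F2Pair g} : x + y = 0 ↔ x = y := by
  rw [add_eq_zero_iff_eq_neg, F2Pair.neg_eq]

lemma Mmat_eq_signChar (x y : F2Pair g) : Mmat g x y = signChar (sympForm x y) := by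
  rw [Mmat, ← signChar_natCast]
  push_cast [ZMod.natCast_val, ZMod.cast_id', id, sympForm, dotProduct, ← Finset.sum_add_distrib]
  exact congrArg signChar (Finset.sum_congr rfl fun i _ ↦ by ring)

lemma sum_signChar_sympForm (x : F2Pair g) :
    ∑ y : F2Pair g, signChar (sympForm x y) = if x = 0 then (2 ^ g) ^ 2 else 0 := by
  calc ∑ y : F2Pair g, signChar (sympForm x y)
      = (∑ u, signChar (x.2 ⬝ᵥ u)) * ∑ v, signChar (x.1 ⬝ᵥ v) := by
        simp only [Fintype.sum_prod_type, Finset.sum_mul_sum, sympForm, AddChar.map_add_eq_mul,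
          dotProduct_comm _ x.2]
        exact Finset.sum_congr rfl fun _ _ ↦ Finset.sum_congr rfl fun _ _ ↦ mul_comm _ _
    _ = if x = 0 then (2 ^ g) ^ 2 else 0 := by
        simp only [sum_signChar_dotProduct, Fintype.card_fin, ite_zero_mul_ite_zero,
          Prod.ext_iff, Prod.fst_zero, Prod.snd_zero, and_comm, sq]

lemma sum_signChar_Qf : ∑ x : F2Pair g, signChar (Qf x) = 2 ^ g := by
  simp [Fintype.sum_prod_type, Qf, ← dotProduct.eq_def, sum_signChar_dotProduct]

lemma sum_signChar_Qf_add_sympForm (x : F2Pair g) :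
    ∑ y : F2Pair g, signChar (Qf y + sympForm x y) = 2 ^ g * signChar (Qf x) := by
  have hshift (y : F2Pair g) : Qf y + sympForm x y = Qf (y + x) + Qf x := by
    rw [Qf_add, sympForm_comm]
    linear_combination -CharTwo.add_self_eq_zero (Qf x)
  simp only [hshift, AddChar.map_add_eq_mul, ← Finset.sum_mul]
  rw [Fintype.sum_equiv (Equiv.addRight x) (fun y ↦ signChar (Qf (y + x)))
      (fun y ↦ signChar (Qf y)) (fun _ ↦ rfl),
    sum_signChar_Qf]

lemma sum_levelSet_signChar_sympForm (ε : ZMod 2) (x : F2Pair g) :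
    ∑ k : {y : F2Pair g // Qf y = ε}, signChar (sympForm x k) =
      ((if x = 0 then (2 ^ g) ^ 2 else 0) + signChar ε * 2 ^ g * signChar (Qf x)) / 2 := by
  have hind (y : F2Pair g) : (if Qf y = ε then signChar (sympForm x y) else 0) =
      (signChar (sympForm x y) + signChar ε * signChar (Qf y + sympForm x y)) / 2 := by
    rw [← boole_mul, boole_eq_signChar, AddChar.map_add_eq_mul]
    ring
  rw [← Finset.sum_subtype (Finset.univ.filter (Qf · = ε)) (by simp)
      (fun y ↦ signChar (sympForm x y)), Finset.sum_filter,
    Finset.sum_congr rfl fun y _ ↦ hind y, ← Finset.sum_div, Finset.sum_add_distrib,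
    ← Finset.mul_sum, sum_signChar_sympForm, sum_signChar_Qf_add_sympForm, mul_assoc]

lemma card_levelSet_Qf (ε : ZMod 2) :
    (Fintype.card {y : F2Pair g // Qf y = ε} : ℝ) = ((2 ^ g) ^ 2 + signChar ε * 2 ^ g) / 2 := by
  simpa [AddChar.map_zero_eq_one, Finset.card_univ] using
    sum_levelSet_signChar_sympForm ε (0 : F2Pair g)

lemma sum_Mmat_mul_Mmat_levelSet (ε : ZMod 2) (x y : {z : F2Pair g // Qf z = 0}) :
    ∑ k : {z : F2Pair g // Qf z = ε}, Mmat g x k * Mmat g y k =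
      ((if x = y then (2 ^ g) ^ 2 else 0) + signChar ε * 2 ^ g * Mmat g x y) / 2 := by
  have hQf : Qf (x.1 + y.1) = sympForm x.1 y.1 := by rw [Qf_add, x.2, y.2, zero_add, zero_add]
  simp only [Mmat_eq_signChar, ← AddChar.map_add_eq_mul, ← sympForm_add_left,
    sum_levelSet_signChar_sympForm, hQf, F2Pair.add_eq_zero_iff, ← Subtype.ext_iff]

lemma Nmat_mul_transpose :
    Nmat g * (Nmat g)ᵀ = (-(2 ^ g / 2) : ℝ) • (Mplus g - (2 ^ g : ℝ) • 1) := by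
  ext x y
  simp only [mul_apply, transpose_apply, Nmat, sum_Mmat_mul_Mmat_levelSet, signChar_one,
    Matrix.smul_apply, Matrix.sub_apply, one_apply, Mplus, smul_eq_mul]
  split_ifs <;> ring

lemma Mplus_isSymm : (Mplus g).IsSymm := by
  ext x y
  simp only [transpose_apply, Mplus, Mmat_eq_signChar, sympForm_comm]

lemma Mplus_mul_self :
    Mplus g * Mplus g = (2 ^ g / 2 : ℝ) • (Mplus g + (2 ^ g : ℝ) • 1) := by
  nth_rewrite 2 [← Mplus_isSymm]
  ext x y
  simp only [mul_apply, transpose_apply, Mplus, sum_Mmat_mul_Mmat_levelSet, AddChar.map_zero_eq_one,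
    Matrix.smul_apply, Matrix.add_apply, one_apply, smul_eq_mul]
  split_ifs <;> ring

lemma Mplus_sub_smul_one_mul_sub_smul_one :
    (Mplus g - (2 ^ g : ℝ) • 1) * (Mplus g - (-(2 ^ g / 2) : ℝ) • 1) = 0 := by
  simp only [sub_mul, mul_sub, smul_mul_assoc, mul_smul_comm, one_mul, mul_one, Mplus_mul_self]
  module

lemma trace_Mplus_sub_smul_one :
    (Mplus g - (2 ^ g : ℝ) • 1).trace =
      Fintype.card {x : F2Pair g // Qf x = 0} * (1 - 2 ^ g) := by
  simp [trace, Mplus, Mmat_eq_signChar, AddChar.map_zero_eq_one, mul_sub]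

lemma two_pow_ne_neg_two_pow_div_two : (2 ^ g : ℝ) ≠ -(2 ^ g / 2) := by
  have : (0 : ℝ) < 2 ^ g := by positivity
  intro h
  linarith

lemma rank_Mplus_sub_smul_one :
    ((Mplus g - (2 ^ g : ℝ) • 1).rank : ℝ) = ((2 ^ g) ^ 2 - 1) / 3 := by
  rw [rank_sub_smul_one_eq_trace_div Mplus_sub_smul_one_mul_sub_smul_one
      two_pow_ne_neg_two_pow_div_two, trace_Mplus_sub_smul_one, card_levelSet_Qf,
    AddChar.map_zero_eq_one]
  field_simp
  ring

lemma rank_Nmat : (Nmat g).rank = (Mplus g - (2 ^ g : ℝ) • 1).rank := by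
  rw [← rank_self_mul_transpose, Nmat_mul_transpose,
    rank_smul_of_mem_nonZeroDivisors _
      (mem_nonZeroDivisors_of_ne_zero (neg_ne_zero.mpr (by positivity)))]

lemma range_mulVecLin_Nmat :
    LinearMap.range (Nmat g).mulVecLin =
      LinearMap.range (Mplus g - (2 ^ g : ℝ) • 1).mulVecLin := by
  rw [← range_mulVecLin_self_mul_transpose, Nmat_mul_transpose,
    range_mulVecLin_smul _ (neg_ne_zero.mpr (by positivity))]

end

/-- `rank N = (1/3)(4^g − 1)`, and the columns of `N` span the full eigenspace
of `M⁺` for the eigenvalue `−2^{g−1}`. -/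
theorem Nmat_rank (g : ℕ) (hg : 1 ≤ g) :
    3 * (Nmat g).rank = 4 ^ g - 1 ∧
      LinearMap.range (Matrix.mulVecLin (Nmat g)) =
        Module.End.eigenspace (Matrix.mulVecLin (Mplus g)) (-(2 : ℝ) ^ (g - 1)) := by
  constructor
  · have hrank : ((3 * (Nmat g).rank : ℕ) : ℝ) = ((4 ^ g - 1 : ℕ) : ℝ) := by
      rw [Nat.cast_sub (Nat.one_le_pow _ _ four_pos), Nat.cast_mul, rank_Nmat,
        rank_Mplus_sub_smul_one, ← pow_mul, mul_comm g, pow_mul]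
      push_cast
      ring
    exact_mod_cast hrank
  · have heigenvalue : -(2 : ℝ) ^ (g - 1) = -(2 ^ g / 2) := by
      rw [← pow_sub_one_mul (by omega : g ≠ 0), mul_div_cancel_right₀ _ two_ne_zero]
    rw [range_mulVecLin_Nmat, range_mulVecLin_sub_smul_one_eq_eigenspace
      Mplus_sub_smul_one_mul_sub_smul_one two_pow_ne_neg_two_pow_div_two, heigenvalue]
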